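/- Let d ≥ 3 and θ > 0. Let (k_t)_{t>0} be jointly measurable kernels satisfying 0 ≤ k_t(x,y) ≤ P_t(x−y), and set T_t f(x) = ∫_{ℝ^d} k_t(x,y) f(y) dy. There is a constant C > 0, depending only on d and θ, such that for every cube Q and every f ∈ L¹(ℝ^d) with supp f ⊆ Q*, one has ∫_{(Q**)^c} sup_{0 < t ≤ d_Q²} |T_t f(x)| dx ≤ C ‖f‖_{L¹(ℝ^d)}. -/
import Mathlib


open MeasureTheory Filter
open scoped ENNReal Topology

noncomputable section

/-- `ℝ^d` as a Euclidean space. -/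
abbrev Rd (d : ℕ) := EuclideanSpace ℝ (Fin d)

/-- The Gauss–Weierstrass kernel `P_t(x) = (4πt)^{-d/2} exp(-|x|²/(4t))`. -/
def gauss (d : ℕ) (t : ℝ) (x : Rd d) : ℝ :=
  (4 * Real.pi * t) ^ (-(d : ℝ) / 2) * Real.exp (-‖x‖ ^ 2 / (4 * t))

/-- A cube in `ℝ^d`, given by its center and (positive) radius. -/
structure Cube (d : ℕ) where
  center : Rd d
  radius : ℝ
  radius_pos : 0 < radius

/-- The diameter `d_Q = 2 √d · r_Q` of a cube. -/
def Cube.diam {d : ℕ} (Q : Cube d) : ℝ := 2 * Real.sqrt d * Q.radius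

/-- The `k`-fold enlargement `Q^{*k} = Q(c_Q, (1+θ)^k r_Q)` of a cube, as a set. -/
def Cube.starSet {d : ℕ} (Q : Cube d) (θ : ℝ) (k : ℕ) : Set (Rd d) :=
  {y | ∀ i, |Q.center i - y i| < (1 + θ) ^ k * Q.radius}

/- ====================  auxiliary lemmas  ==================== -/

lemma aux_abs_coord_le_norm {d : ℕ} (v : Rd d) (i : Fin d) : |v i| ≤ ‖v‖ := by
  rw [EuclideanSpace.norm_eq]
  have h1 : |v i| ^ 2 ≤ ∑ j, ‖v j‖ ^ 2 := by
    have := Finset.single_le_sum (f := fun j => ‖v j‖ ^ 2)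
      (fun j _ => by positivity) (Finset.mem_univ i)
    simpa [Real.norm_eq_abs] using this
  calc |v i| = Real.sqrt (|v i| ^ 2) := by rw [Real.sqrt_sq_eq_abs, abs_abs]
    _ ≤ _ := Real.sqrt_le_sqrt h1

lemma aux_norm_le_of_coords {d : ℕ} (v : Rd d) {b : ℝ} (hb : 0 ≤ b)
    (h : ∀ i, |v i| ≤ b) : ‖v‖ ≤ Real.sqrt d * b := by
  rw [EuclideanSpace.norm_eq]
  have h1 : ∑ j, ‖v j‖ ^ 2 ≤ (d : ℝ) * b ^ 2 := by
    calc ∑ j, ‖v j‖ ^ 2 ≤ ∑ _j : Fin d, b ^ 2 := by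
          refine Finset.sum_le_sum fun j _ => ?_
          rw [Real.norm_eq_abs]
          exact pow_le_pow_left₀ (abs_nonneg _) (h j) 2
      _ = (d : ℝ) * b ^ 2 := by simp [Finset.sum_const, mul_comm]
  calc Real.sqrt (∑ j, ‖v j‖ ^ 2) ≤ Real.sqrt ((d : ℝ) * b ^ 2) := Real.sqrt_le_sqrt h1
    _ = Real.sqrt d * b := by
        rw [Real.sqrt_mul (by positivity), Real.sqrt_sq hb]

lemma aux_exp_neg_le (n : ℕ) {a : ℝ} (ha : 0 < a) :
    Real.exp (-a) ≤ (n.factorial : ℝ) * (a⁻¹) ^ n := by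
  have h1 : a ^ n / (n.factorial : ℝ) ≤ Real.exp a := by
    refine le_trans ?_ (Real.sum_le_exp_of_nonneg ha.le (n + 1))
    exact Finset.single_le_sum (f := fun i => a ^ i / (i.factorial : ℝ))
      (fun i _ => by positivity) (Finset.mem_range.mpr (Nat.lt_succ_self n))
  have h2 : (0 : ℝ) < a ^ n / (n.factorial : ℝ) := by positivity
  rw [Real.exp_neg]
  calc (Real.exp a)⁻¹ ≤ (a ^ n / (n.factorial : ℝ))⁻¹ := by
        exact inv_anti₀ h2 h1
    _ = (n.factorial : ℝ) * (a⁻¹) ^ n := by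
        rw [inv_div, inv_pow]; ring

/-- The key Gaussian kernel bound: for `0 < t ≤ T` and `0 < L ≤ ‖z‖`,
`P_t(z) ≤ K₀ T^{d/2} L^{-2d}`. -/
lemma aux_gauss_le (d : ℕ) {t T L : ℝ} (ht : 0 < t) (htT : t ≤ T) {z : Rd d}
    (hL : 0 < L) (hLz : L ≤ ‖z‖) :
    gauss d t z ≤ (4 * Real.pi) ^ (-(d : ℝ) / 2) * (d.factorial : ℝ) * 4 ^ d *
      T ^ ((d : ℝ) / 2) * (L ^ (2 * d))⁻¹ := by
  have hπ : (0 : ℝ) < 4 * Real.pi := by positivity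
  have hs : (0 : ℝ) < ‖z‖ := lt_of_lt_of_le hL hLz
  have ha : (0 : ℝ) < ‖z‖ ^ 2 / (4 * t) := by positivity
  have hexp : Real.exp (-‖z‖ ^ 2 / (4 * t)) ≤
      (d.factorial : ℝ) * ((‖z‖ ^ 2 / (4 * t))⁻¹) ^ d := by
    rw [neg_div]; exact aux_exp_neg_le d ha
  have hsplit : (4 * Real.pi * t) ^ (-(d : ℝ) / 2)
      = (4 * Real.pi) ^ (-(d : ℝ) / 2) * t ^ (-(d : ℝ) / 2) := by
    exact Real.mul_rpow hπ.le ht.le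
  have hinvpow : ((‖z‖ ^ 2 / (4 * t))⁻¹) ^ d = 4 ^ d * t ^ d * (‖z‖ ^ (2 * d))⁻¹ := by
    rw [inv_div, div_pow, mul_pow, pow_mul]
    ring
  have hrpow : t ^ (-(d : ℝ) / 2) * t ^ d = t ^ ((d : ℝ) / 2) := by
    rw [← Real.rpow_natCast t d, ← Real.rpow_add ht]
    congr 1
    ring
  have hrle : t ^ ((d : ℝ) / 2) ≤ T ^ ((d : ℝ) / 2) :=
    Real.rpow_le_rpow ht.le htT (by positivity)
  have hzle : (‖z‖ ^ (2 * d))⁻¹ ≤ (L ^ (2 * d))⁻¹ := by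
    gcongr
  have hb1 : (0 : ℝ) ≤ (4 * Real.pi) ^ (-(d : ℝ) / 2) := by positivity
  calc gauss d t z
      ≤ (4 * Real.pi) ^ (-(d : ℝ) / 2) * t ^ (-(d : ℝ) / 2) *
          ((d.factorial : ℝ) * ((‖z‖ ^ 2 / (4 * t))⁻¹) ^ d) := by
        rw [gauss, hsplit]
        have h0 : (0 : ℝ) ≤ (4 * Real.pi) ^ (-(d : ℝ) / 2) * t ^ (-(d : ℝ) / 2) := by
          positivity
        exact mul_le_mul_of_nonneg_left hexp h0
    _ = (4 * Real.pi) ^ (-(d : ℝ) / 2) * (d.factorial : ℝ) * 4 ^ d *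
          (t ^ (-(d : ℝ) / 2) * t ^ d) * (‖z‖ ^ (2 * d))⁻¹ := by
        rw [hinvpow]; ring
    _ = (4 * Real.pi) ^ (-(d : ℝ) / 2) * (d.factorial : ℝ) * 4 ^ d *
          t ^ ((d : ℝ) / 2) * (‖z‖ ^ (2 * d))⁻¹ := by rw [hrpow]
    _ ≤ (4 * Real.pi) ^ (-(d : ℝ) / 2) * (d.factorial : ℝ) * 4 ^ d *
          T ^ ((d : ℝ) / 2) * (L ^ (2 * d))⁻¹ := by
        have hfac : (0 : ℝ) ≤ (4 * Real.pi) ^ (-(d : ℝ) / 2) * (d.factorial : ℝ) * 4 ^ d := by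
          positivity
        have hT0 : (0:ℝ) ≤ T := ht.le.trans htT
        exact mul_le_mul (mul_le_mul_of_nonneg_left hrle hfac) hzle
          (by positivity) (mul_nonneg hfac (Real.rpow_nonneg hT0 _))

lemma aux_measurableSet_starSet {d : ℕ} (Q : Cube d) (θ : ℝ) (k : ℕ) :
    MeasurableSet (Q.starSet θ k) := by
  have : Q.starSet θ k
      = ⋂ i, {y : Rd d | |Q.center i - y i| < (1 + θ) ^ k * Q.radius} := by
    ext y; simp [Cube.starSet, Set.mem_iInter]
  rw [this]
  refine MeasurableSet.iInter fun i => ?_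
  have hm : Measurable fun y : Rd d => |Q.center i - y i| := by
    have : Measurable fun y : Rd d => y i := by
      exact (EuclideanSpace.proj i).continuous.measurable
    exact (measurable_const.sub this).abs
  exact measurableSet_lt hm measurable_const

set_option maxHeartbeats 2000000 in
/-- Lemma 1: there is `C > 0`, depending only on `d` and `θ`, such that for
any measurable kernels `0 ≤ k_t(x,y) ≤ P_t(x-y)`, any cube `Q` and any `f ∈ L¹` supported
in `Q^*`, `∫_{(Q^{**})^c} sup_{0 < t ≤ d_Q²} |T_t f(x)| dx ≤ C ‖f‖_{L¹}`. -/
theorem statement8 (d : ℕ) (hd : 3 ≤ d) (θ : ℝ) (hθ : 0 < θ) :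
    ∃ C > (0 : ℝ), ∀ k : ℝ → Rd d → Rd d → ℝ,
      (Measurable fun p : ℝ × Rd d × Rd d => k p.1 p.2.1 p.2.2) →
      (∀ t > (0 : ℝ), ∀ x y : Rd d, 0 ≤ k t x y ∧ k t x y ≤ gauss d t (x - y)) →
      ∀ Q : Cube d, ∀ f : Rd d → ℝ, Integrable f →
        Function.support f ⊆ Q.starSet θ 1 →
        (∫⁻ x in (Q.starSet θ 2)ᶜ,
            ⨆ t ∈ Set.Ioc (0 : ℝ) (Q.diam ^ 2), ENNReal.ofReal |∫ y, k t x y * f y|) ≤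
          ENNReal.ofReal (C * ∫ x, |f x|) := by
  have hd1 : (1 : ℝ) ≤ Real.sqrt d := by
    rw [show (1 : ℝ) = Real.sqrt 1 by simp]
    exact Real.sqrt_le_sqrt (by exact_mod_cast le_trans (by norm_num) hd)
  -- the basic constants
  set δ₀ : ℝ := θ * (1 + θ) with hδ₀def
  set a₀ : ℝ := Real.sqrt d * (1 + θ) with ha₀def
  have hδ₀pos : 0 < δ₀ := by positivity
  have ha₀pos : 0 < a₀ := by positivity
  have ha₀ge1 : 1 ≤ a₀ := by nlinarith
  set β : ℝ := min (δ₀ / (1 + 2 * a₀)) 4⁻¹ with hβdef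
  have hβpos : 0 < β := by
    apply lt_min (by positivity) (by norm_num)
  set K₀ : ℝ := (4 * Real.pi) ^ (-(d : ℝ) / 2) * (d.factorial : ℝ) * 4 ^ d with hK₀def
  have hK₀pos : 0 < K₀ := by positivity
  set K₁ : ℝ := K₀ * (2 * Real.sqrt d) ^ d * (β ^ (2 * d))⁻¹ with hK₁def
  have hK₁pos : 0 < K₁ := by positivity
  set I₀ : ℝ := ∫ u : Rd d, ((1 + ‖u‖) ^ (2 * d))⁻¹ with hI₀def
  have hI₀int : Integrable fun u : Rd d => ((1 + ‖u‖) ^ (2 * d))⁻¹ := by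
    have heq : (fun u : Rd d => ((1 + ‖u‖) ^ (2 * d))⁻¹)
        = fun u : Rd d => (1 + ‖u‖) ^ (-((2 * d : ℕ) : ℝ)) := by
      funext u
      rw [Real.rpow_neg (by positivity), Real.rpow_natCast]
    rw [heq]
    apply integrable_one_add_norm
    rw [finrank_euclideanSpace_fin]
    have : d < 2 * d := by omega
    exact_mod_cast this
  have hI₀nonneg : 0 ≤ I₀ := integral_nonneg fun u => by positivity
  refine ⟨K₁ * I₀ + 1, by positivity, ?_⟩
  intro k hkm hk Q f hf hsupp
  have hr : 0 < Q.radius := Q.radius_pos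
  set r : ℝ := Q.radius with hrdef
  set c : Rd d := Q.center with hcdef
  set M : ℝ := ∫ x, |f x| with hMdef
  have hM : 0 ≤ M := integral_nonneg fun x => abs_nonneg _
  have hfabs : Integrable fun y => |f y| := hf.abs
  set g : Rd d → ℝ := fun x => K₁ * r ^ d * ((r + ‖x - c‖) ^ (2 * d))⁻¹ with hgdef
  -- the distance estimate
  have hdist : ∀ x ∉ Q.starSet θ 2, ∀ y ∈ Q.starSet θ 1,
      β * (r + ‖x - c‖) ≤ ‖x - y‖ := by
    intro x hx y hy
    obtain ⟨i, hi⟩ : ∃ i, (1 + θ) ^ 2 * r ≤ |c i - x i| := by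
      by_contra hcon
      push_neg at hcon
      exact hx fun i => hcon i
    have hyi : |c i - y i| < (1 + θ) ^ 1 * r := hy i
    have h1 : δ₀ * r ≤ ‖x - y‖ := by
      have habs : |c i - x i| - |c i - y i| ≤ |x i - y i| := by
        have h := abs_sub_abs_le_abs_sub (c i - x i) (c i - y i)
        rw [show (c i - x i) - (c i - y i) = y i - x i by ring] at h
        rw [abs_sub_comm (x i) (y i)]
        linarith
      have hxyi : δ₀ * r ≤ |x i - y i| := by nlinarith [abs_nonneg (c i - y i)]
      have hcoord : |x i - y i| ≤ ‖x - y‖ := by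
        have := aux_abs_coord_le_norm (x - y) i
        simpa using this
      linarith
    have h2 : ‖y - c‖ ≤ a₀ * r := by
      have := aux_norm_le_of_coords (y - c) (b := (1 + θ) * r) (by positivity)
        (fun j => by
          have := hy j
          have hc : (y - c) j = y j - c j := by simp
          rw [hc, abs_sub_comm]
          simp only [pow_one] at this
          linarith)
      calc ‖y - c‖ ≤ Real.sqrt d * ((1 + θ) * r) := this
        _ = a₀ * r := by rw [ha₀def]; ring
    have h3 : ‖x - c‖ - a₀ * r ≤ ‖x - y‖ := by
      have htri : ‖x - c‖ ≤ ‖x - y‖ + ‖y - c‖ := by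
        have := norm_add_le (x - y) (y - c)
        simpa using this
      linarith
    have hnn : 0 ≤ ‖x - c‖ := norm_nonneg _
    rcases le_or_gt ‖x - c‖ (2 * a₀ * r) with hcs | hcs
    · have hβ1 : β ≤ δ₀ / (1 + 2 * a₀) := min_le_left _ _
      have key : β * (r + ‖x - c‖) ≤ δ₀ * r := by
        have h5 : β * (r + ‖x - c‖) ≤ β * (r * (1 + 2 * a₀)) := by
          apply mul_le_mul_of_nonneg_left _ hβpos.le
          nlinarith
        have h6 : β * (r * (1 + 2 * a₀)) ≤ δ₀ / (1 + 2 * a₀) * (r * (1 + 2 * a₀)) := by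
          apply mul_le_mul_of_nonneg_right hβ1 (by positivity)
        have h7 : δ₀ / (1 + 2 * a₀) * (r * (1 + 2 * a₀)) = δ₀ * r := by
          field_simp
        linarith
      linarith
    · have hβ2 : β ≤ 4⁻¹ := min_le_right _ _
      have hr_le : r ≤ ‖x - c‖ := by
        have h := mul_le_mul_of_nonneg_right (show (1:ℝ) ≤ 2 * a₀ by linarith) hr.le
        rw [one_mul] at h
        linarith
      have h4 : ‖x - c‖ / 2 ≤ ‖x - y‖ := by linarith
      have h5 : β * (r + ‖x - c‖) ≤ 4⁻¹ * (‖x - c‖ + ‖x - c‖) :=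
        mul_le_mul hβ2 (by linarith) (by positivity) (by norm_num)
      linarith
  -- the pointwise bound on the supremum
  have hTpos : (0 : ℝ) ≤ Q.diam := by
    rw [Cube.diam]; positivity
  have hsup : ∀ x ∉ Q.starSet θ 2,
      (⨆ t ∈ Set.Ioc (0 : ℝ) (Q.diam ^ 2), ENNReal.ofReal |∫ y, k t x y * f y|) ≤
        ENNReal.ofReal (g x * M) := by
    intro x hx
    refine iSup₂_le fun t ht => ?_
    apply ENNReal.ofReal_le_ofReal
    have hnnb : ∀ y, |k t x y * f y| ≤ g x * |f y| := by
      intro y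
      by_cases hfy : f y = 0
      · simp [hfy]
      · have hy : y ∈ Q.starSet θ 1 := hsupp (Function.mem_support.mpr hfy)
        have hL : β * (r + ‖x - c‖) ≤ ‖x - y‖ := hdist x hx y hy
        have hLpos : 0 < β * (r + ‖x - c‖) := by positivity
        have hgauss := aux_gauss_le d (T := Q.diam ^ 2) ht.1 ht.2 hLpos hL
        have hTd : ((Q.diam ^ 2 : ℝ)) ^ ((d : ℝ) / 2) = Q.diam ^ d := by
          rw [← Real.rpow_natCast Q.diam 2, ← Real.rpow_mul hTpos]
          have hexp2 : ((2:ℕ):ℝ) * ((d : ℝ) / 2) = ((d:ℕ):ℝ) := by push_cast; ring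
          rw [hexp2, Real.rpow_natCast]
        have hgeq : K₀ * (Q.diam ^ 2) ^ ((d : ℝ) / 2) * ((β * (r + ‖x - c‖)) ^ (2 * d))⁻¹
            = g x := by
          rw [hTd, hgdef, hK₁def, Cube.diam, mul_pow (β) (r + ‖x - c‖),
            mul_inv, mul_pow (2 * Real.sqrt d) r]
          ring
        have hgb : gauss d t (x - y) ≤ g x := by
          rw [← hgeq]
          calc gauss d t (x - y) ≤ (4 * Real.pi) ^ (-(d : ℝ) / 2) * (d.factorial : ℝ) * 4 ^ d *
                (Q.diam ^ 2) ^ ((d : ℝ) / 2) * ((β * (r + ‖x - c‖)) ^ (2 * d))⁻¹ := hgauss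
            _ = K₀ * (Q.diam ^ 2) ^ ((d : ℝ) / 2) * ((β * (r + ‖x - c‖)) ^ (2 * d))⁻¹ := by
                rw [hK₀def]
        have hk0 := (hk t ht.1 x y).1
        have hk1 := (hk t ht.1 x y).2
        rw [abs_mul, abs_of_nonneg hk0]
        exact mul_le_mul_of_nonneg_right (hk1.trans hgb) (abs_nonneg _)
    calc |∫ y, k t x y * f y| ≤ ∫ y, |k t x y * f y| := by
          have hni := norm_integral_le_integral_norm
            (μ := (volume : Measure (Rd d))) (f := fun y => k t x y * f y)
          simpa only [Real.norm_eq_abs] using hni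
      _ ≤ ∫ y, g x * |f y| := by
          refine integral_mono_of_nonneg (ae_of_all _ fun y => abs_nonneg _)
            (hfabs.const_mul _) (ae_of_all _ hnnb)
      _ = g x * M := by rw [integral_const_mul]
  -- integrability of g
  set h : Rd d → ℝ := fun x => ((r + ‖x - c‖) ^ (2 * d))⁻¹ with hhdef
  have hh_cont : Continuous h := by
    apply Continuous.inv₀
    · exact (continuous_const.add ((continuous_id.sub continuous_const).norm)).pow _
    · intro x; positivity
  set m : ℝ := min r 1 with hmdef
  have hm0 : 0 < m := lt_min hr one_pos
  have hmr : m ≤ r := min_le_left _ _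
  have hm1 : m ≤ 1 := min_le_right _ _
  set Kc : ℝ := 1 + ‖c‖ with hKcdef
  have hKc1 : 1 ≤ Kc := by rw [hKcdef]; have := norm_nonneg c; linarith
  have hbound : ∀ x : Rd d, m / Kc * (1 + ‖x‖) ≤ r + ‖x - c‖ := by
    intro x
    have hx1 : ‖x‖ ≤ ‖x - c‖ + ‖c‖ := by
      have := norm_add_le (x - c) c
      simpa using this
    rw [div_mul_eq_mul_div, div_le_iff₀ (by linarith)]
    have hnc : 0 ≤ ‖c‖ := norm_nonneg _
    have hnxc : 0 ≤ ‖x - c‖ := norm_nonneg _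
    rw [hKcdef]
    linarith [mul_le_mul_of_nonneg_right hmr hnc, mul_le_mul_of_nonneg_right hm1 hnxc,
      mul_le_mul_of_nonneg_left hx1 hm0.le, mul_nonneg hnxc hnc,
      mul_le_mul_of_nonneg_right hmr (mul_nonneg hnxc hnc)]
  have hh_int : Integrable h := by
    refine (hI₀int.const_mul ((Kc / m) ^ (2 * d))).mono'
      hh_cont.aestronglyMeasurable (ae_of_all _ fun x => ?_)
    have hpos : (0 : ℝ) < r + ‖x - c‖ := by positivity
    have h1 : (m / Kc * (1 + ‖x‖)) ^ (2 * d) ≤ (r + ‖x - c‖) ^ (2 * d) :=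
      pow_le_pow_left₀ (by positivity) (hbound x) _
    have h2 : h x ≤ ((m / Kc * (1 + ‖x‖)) ^ (2 * d))⁻¹ := by
      rw [hhdef]
      exact inv_anti₀ (by positivity) h1
    have h3 : ((m / Kc * (1 + ‖x‖)) ^ (2 * d))⁻¹
        = (Kc / m) ^ (2 * d) * ((1 + ‖x‖) ^ (2 * d))⁻¹ := by
      rw [mul_pow, mul_inv, ← inv_pow, inv_div]
    rw [Real.norm_eq_abs, abs_of_nonneg (by positivity)]
    rw [h3] at h2
    exact h2
  have hg_int : Integrable g := by
    have : g = fun x => K₁ * r ^ d * h x := rfl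
    rw [this]
    exact hh_int.const_mul _
  -- value of the integral of h
  have hfinrank : Module.finrank ℝ (Rd d) = d := finrank_euclideanSpace_fin
  have hh_eq : ∀ x : Rd d, h x = (r ^ (2 * d))⁻¹ *
      ((fun u : Rd d => ((1 + ‖u‖) ^ (2 * d))⁻¹) (r⁻¹ • (x - c))) := by
    intro x
    have hnorm : ‖(r⁻¹ : ℝ) • (x - c)‖ = r⁻¹ * ‖x - c‖ := by
      rw [norm_smul, Real.norm_eq_abs, abs_of_pos (by positivity)]
    simp only [hnorm]
    have : (1 + r⁻¹ * ‖x - c‖) = r⁻¹ * (r + ‖x - c‖) := by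
      field_simp
    rw [hhdef, this, mul_pow, mul_inv, inv_pow, inv_inv]
    rw [← mul_assoc, inv_mul_cancel₀ (pow_ne_zero _ hr.ne'), one_mul]
  have hh_val : ∫ x, h x = (r ^ d)⁻¹ * I₀ := by
    have step1 : ∫ x, h x = (r ^ (2 * d))⁻¹ *
        ∫ x : Rd d, ((fun u : Rd d => ((1 + ‖u‖) ^ (2 * d))⁻¹) (r⁻¹ • (x - c))) := by
      rw [← integral_const_mul]
      exact integral_congr_ae (ae_of_all _ hh_eq)
    have step2 : (∫ x : Rd d,
        ((fun u : Rd d => ((1 + ‖u‖) ^ (2 * d))⁻¹) (r⁻¹ • (x - c))))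
        = ∫ x : Rd d, ((fun u : Rd d => ((1 + ‖u‖) ^ (2 * d))⁻¹) (r⁻¹ • x)) :=
      integral_sub_right_eq_self (fun x => ((fun u : Rd d => ((1 + ‖u‖) ^ (2 * d))⁻¹) (r⁻¹ • x))) c
    have step3 : (∫ x : Rd d, ((fun u : Rd d => ((1 + ‖u‖) ^ (2 * d))⁻¹) (r⁻¹ • x)))
        = r ^ d * I₀ := by
      have := Measure.integral_comp_inv_smul (volume : Measure (Rd d))
        (fun u : Rd d => ((1 + ‖u‖) ^ (2 * d))⁻¹) r
      rw [hfinrank] at this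
      rw [this, abs_of_pos (show (0:ℝ) < r ^ d by positivity), smul_eq_mul]
    rw [step1, step2, step3]
    have hrne : (r : ℝ) ≠ 0 := hr.ne'
    field_simp
    ring
  have hg_val : ∫ x, g x = K₁ * I₀ := by
    have : ∫ x, g x = K₁ * r ^ d * ∫ x, h x := by
      rw [← integral_const_mul]
    rw [this, hh_val]
    field_simp
  -- putting everything together
  have hmeasS : MeasurableSet (Q.starSet θ 2)ᶜ := (aux_measurableSet_starSet Q θ 2).compl
  calc (∫⁻ x in (Q.starSet θ 2)ᶜ,
        ⨆ t ∈ Set.Ioc (0 : ℝ) (Q.diam ^ 2), ENNReal.ofReal |∫ y, k t x y * f y|)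
      ≤ ∫⁻ x in (Q.starSet θ 2)ᶜ, ENNReal.ofReal (g x * M) :=
        setLIntegral_mono' hmeasS fun x hx => hsup x hx
    _ ≤ ∫⁻ x, ENNReal.ofReal (g x * M) := setLIntegral_le_lintegral _ _
    _ = ENNReal.ofReal (∫ x, g x * M) := by
        rw [ofReal_integral_eq_lintegral_ofReal (hg_int.mul_const M)
          (ae_of_all _ fun x => by positivity)]
    _ ≤ ENNReal.ofReal ((K₁ * I₀ + 1) * ∫ x, |f x|) := by
        apply ENNReal.ofReal_le_ofReal
        rw [integral_mul_const, hg_val]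
        have : K₁ * I₀ ≤ K₁ * I₀ + 1 := by linarith
        exact mul_le_mul_of_nonneg_right this hM
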